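/- arXiv:1406.0981 — 2 statements merged into one kernel-verified Lean document; each statement's English description precedes it below -/
import Mathlib

section
/- Let p ≡ 3 (mod 4) be a prime and work in ℍ[ℚ, −1, −p]. Every order of ℍ[ℚ, −1, −p] that contains both i and j is contained in O₁ := ℤ·1 + ℤ·i + ℤ·(1+j)/2 + ℤ·(i+k)/2 or in O₂ := ℤ·1 + ℤ·i + ℤ·(1+k)/2 + ℤ·(i−j)/2. -/
open Quaternion

/-- The reduced norm on the quaternion algebra `ℍ[ℚ, a, b]`. -/
noncomputable def Nrd {a b : ℚ} (α : ℍ[ℚ, a, b]) : ℚ := (α * star α).re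

/-- The reduced trace on the quaternion algebra `ℍ[ℚ, a, b]`. -/
noncomputable def Trd {a b : ℚ} (α : ℍ[ℚ, a, b]) : ℚ := (α + star α).re

/-- An order in `ℍ[ℚ, a, b]`: a subring containing 1 that spans the algebra over `ℚ` and all of
whose elements have reduced trace and reduced norm in `ℤ`. -/
def IsOrder {a b : ℚ} (O : Set ℍ[ℚ, a, b]) : Prop :=
  (∃ S : Subring ℍ[ℚ, a, b], (S : Set ℍ[ℚ, a, b]) = O) ∧
  Submodule.span ℚ O = ⊤ ∧
  ∀ x ∈ O, (∃ t : ℤ, Trd x = (t : ℚ)) ∧ (∃ n : ℤ, Nrd x = (n : ℚ))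

/-- A maximal order: an order not properly contained in any other order. -/
def IsMaximalOrder {a b : ℚ} (O : Set ℍ[ℚ, a, b]) : Prop :=
  IsOrder O ∧ ∀ O' : Set ℍ[ℚ, a, b], IsOrder O' → O ⊆ O' → O' = O

/-- The suborder `ℤ·1 + ℤ·i + ℤ·j + ℤ·k` of `ℍ[ℚ, a, b]`, as a `ℤ`-submodule. -/
def stdLattice (a b : ℚ) : Submodule ℤ ℍ[ℚ, a, b] :=
  Submodule.span ℤ ({1, ⟨0,1,0,0⟩, ⟨0,0,1,0⟩, ⟨0,0,0,1⟩} : Set ℍ[ℚ, a, b])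

/-- The `ℤ`-submodule `ℤ·1 + ℤ·i + ℤ·(1+j)/2 + ℤ·(i+k)/2` of `ℍ[ℚ, −1, −p]`. -/
def Ord₁ (p : ℚ) : Submodule ℤ ℍ[ℚ, -1, -p] :=
  Submodule.span ℤ ({1, ⟨0,1,0,0⟩,
    ((2:ℚ)⁻¹) • (1 + (⟨0,0,1,0⟩ : ℍ[ℚ, -1, -p])),
    ((2:ℚ)⁻¹) • ((⟨0,1,0,0⟩ : ℍ[ℚ, -1, -p]) + ⟨0,0,0,1⟩)} : Set ℍ[ℚ, -1, -p])

/-- The `ℤ`-submodule `ℤ·1 + ℤ·i + ℤ·(1+k)/2 + ℤ·(i−j)/2` of `ℍ[ℚ, −1, −p]`. -/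
def Ord₂ (p : ℚ) : Submodule ℤ ℍ[ℚ, -1, -p] :=
  Submodule.span ℤ ({1, ⟨0,1,0,0⟩,
    ((2:ℚ)⁻¹) • (1 + (⟨0,0,0,1⟩ : ℍ[ℚ, -1, -p])),
    ((2:ℚ)⁻¹) • ((⟨0,1,0,0⟩ : ℍ[ℚ, -1, -p]) - ⟨0,0,1,0⟩)} : Set ℍ[ℚ, -1, -p])

/-! Pairing `x ∈ O` with `1, i, j, k` under the reduced trace shows that `2x₀`, `2x₁`, `2p·x₂`,
`2p·x₃` are integers. Integrality of `Nrd x = x₀² + x₁² + p(x₂² + x₃²)` then gives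
`p ∣ (2p·x₂)² + (2p·x₃)²`, and as `-1` is not a square mod `p`, all coordinates lie in `½ℤ`.
Reading `4 Nrd x = A² + B² + p(C² + D²)` modulo 4 pairs the parities of the numerators as
`A ≡ C, B ≡ D` (so `x ∈ O₁`) or `A ≡ D, B ≡ C` (so `x ∈ O₂`). Finally an additive group covered
by two subgroups lies in one of them. -/

section

variable {a b : ℚ}

theorem trd_eq (x : ℍ[ℚ, a, b]) : Trd x = 2 * x.re := by
  simp only [Trd, QuaternionAlgebra.re_add, QuaternionAlgebra.re_star, zero_mul, add_zero]
  ring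

theorem nrd_eq (x : ℍ[ℚ, a, b]) :
    Nrd x = x.re ^ 2 - a * x.imI ^ 2 - b * x.imJ ^ 2 + a * b * x.imK ^ 2 := by
  simp only [Nrd, QuaternionAlgebra.re_mul, QuaternionAlgebra.re_star, QuaternionAlgebra.imI_star,
    QuaternionAlgebra.imJ_star, QuaternionAlgebra.imK_star]
  ring

end

theorem Int.dvd_of_dvd_sq_add_sq {p : ℕ} [Fact p.Prime] (hp3 : p % 4 = 3) {x y : ℤ}
    (h : (p : ℤ) ∣ x ^ 2 + y ^ 2) : (p : ℤ) ∣ y := by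
  by_contra hy
  rw [← ZMod.intCast_zmod_eq_zero_iff_dvd] at h hy
  push_cast at h
  exact ZMod.mod_four_ne_three_of_sq_eq_neg_sq' hy (eq_neg_of_add_eq_zero_left h) hp3

theorem Int.modEq_two_of_sq_add_sq_add_mul_sq_add_sq {p A B C D n : ℤ} (hp3 : p % 4 = 3)
    (h : A ^ 2 + B ^ 2 + p * (C ^ 2 + D ^ 2) = 4 * n) :
    (A ≡ C [ZMOD 2] ∧ B ≡ D [ZMOD 2]) ∨ (A ≡ D [ZMOD 2] ∧ B ≡ C [ZMOD 2]) := by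
  -- Mod 4 squares record parity and `p ≡ -1`: `A, B` and `C, D` have equally many odd entries.
  have key : ∀ α β γ δ : ZMod 4, α ^ 2 + β ^ 2 + 3 * (γ ^ 2 + δ ^ 2) = 0 →
      (α.val % 2 = γ.val % 2 ∧ β.val % 2 = δ.val % 2) ∨
      (α.val % 2 = δ.val % 2 ∧ β.val % 2 = γ.val % 2) := by decide
  have hp : (p : ZMod 4) = 3 := by
    simpa using (ZMod.intCast_eq_intCast_iff _ _ _).mpr (show p ≡ 3 [ZMOD 4] from hp3)
  have h4 := congrArg (Int.cast : ℤ → ZMod 4) h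
  push_cast [hp] at h4
  rw [show (4 : ZMod 4) = 0 from rfl, zero_mul] at h4
  have := key _ _ _ _ h4
  have hA := ZMod.val_intCast (n := 4) A
  have hB := ZMod.val_intCast (n := 4) B
  have hC := ZMod.val_intCast (n := 4) C
  have hD := ZMod.val_intCast (n := 4) D
  unfold Int.ModEq
  omega

theorem mem_ord₁_of_modEq (p : ℚ) {A B C D : ℤ} (hAC : A ≡ C [ZMOD 2]) (hBD : B ≡ D [ZMOD 2]) :
    (⟨A / 2, B / 2, C / 2, D / 2⟩ : ℍ[ℚ, -1, -p]) ∈ Ord₁ p := by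
  obtain ⟨s, hs⟩ := hAC.dvd
  obtain ⟨t, ht⟩ := hBD.dvd
  qify at hs ht
  have hx : (⟨A / 2, B / 2, C / 2, D / 2⟩ : ℍ[ℚ, -1, -p]) = (-s) • (1 : ℍ[ℚ, -1, -p])
      + (-t) • (⟨0, 1, 0, 0⟩ : ℍ[ℚ, -1, -p])
      + C • ((2 : ℚ)⁻¹ • (1 + (⟨0, 0, 1, 0⟩ : ℍ[ℚ, -1, -p])))
      + D • ((2 : ℚ)⁻¹ • ((⟨0, 1, 0, 0⟩ : ℍ[ℚ, -1, -p]) + ⟨0, 0, 0, 1⟩)) := by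
    ext <;> simp <;> linarith
  rw [hx]
  refine add_mem (add_mem (add_mem ?_ ?_) ?_) ?_ <;>
    exact Submodule.smul_mem _ _ (Submodule.subset_span (by simp))

theorem mem_ord₂_of_modEq (p : ℚ) {A B C D : ℤ} (hAD : A ≡ D [ZMOD 2]) (hBC : B ≡ C [ZMOD 2]) :
    (⟨A / 2, B / 2, C / 2, D / 2⟩ : ℍ[ℚ, -1, -p]) ∈ Ord₂ p := by
  obtain ⟨s, hs⟩ := hAD.dvd
  obtain ⟨t, ht⟩ := hBC.dvd
  qify at hs ht
  have hx : (⟨A / 2, B / 2, C / 2, D / 2⟩ : ℍ[ℚ, -1, -p]) = (-s) • (1 : ℍ[ℚ, -1, -p])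
      + (B + t) • (⟨0, 1, 0, 0⟩ : ℍ[ℚ, -1, -p])
      + D • ((2 : ℚ)⁻¹ • (1 + (⟨0, 0, 0, 1⟩ : ℍ[ℚ, -1, -p])))
      + (-C) • ((2 : ℚ)⁻¹ • ((⟨0, 1, 0, 0⟩ : ℍ[ℚ, -1, -p]) - ⟨0, 0, 1, 0⟩)) := by
    ext <;> simp <;> linarith
  rw [hx]
  refine add_mem (add_mem (add_mem ?_ ?_) ?_) ?_ <;>
    exact Submodule.smul_mem _ _ (Submodule.subset_span (by simp))

theorem IsOrder.exists_half_int_coords {p : ℕ} (hp : p.Prime) (hp3 : p % 4 = 3)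
    {O : Set ℍ[ℚ, -1, -(p : ℚ)]} (hO : IsOrder O)
    (hi : (⟨0, 1, 0, 0⟩ : ℍ[ℚ, -1, -(p : ℚ)]) ∈ O)
    (hj : (⟨0, 0, 1, 0⟩ : ℍ[ℚ, -1, -(p : ℚ)]) ∈ O) {x : ℍ[ℚ, -1, -(p : ℚ)]} (hx : x ∈ O) :
    ∃ A B C D : ℤ, x = ⟨A / 2, B / 2, C / 2, D / 2⟩ := by
  have := Fact.mk hp
  obtain ⟨⟨S, rfl⟩, -, hint⟩ := hO
  have hk : (⟨0, 0, 0, 1⟩ : ℍ[ℚ, -1, -(p : ℚ)]) ∈ S := by simpa using S.mul_mem hi hj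
  obtain ⟨A, hA⟩ := (hint x hx).1
  obtain ⟨B, hB⟩ := (hint _ (S.mul_mem hx hi)).1
  obtain ⟨c, hc⟩ := (hint _ (S.mul_mem hx hj)).1
  obtain ⟨d, hd⟩ := (hint _ (S.mul_mem hx hk)).1
  obtain ⟨n, hn⟩ := (hint x hx).2
  simp only [trd_eq, nrd_eq, QuaternionAlgebra.re_mul] at hA hB hc hd hn
  have hnorm : (p : ℤ) * (A ^ 2 + B ^ 2) + (c ^ 2 + d ^ 2) = p * (4 * n) := by
    qify
    rw [← hA, ← hB, ← hc, ← hd, ← hn]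
    ring
  have hcd : (p : ℤ) ∣ c ^ 2 + d ^ 2 :=
    (Int.dvd_add_right (dvd_mul_right _ _)).mp (hnorm ▸ dvd_mul_right _ _)
  obtain ⟨C, rfl⟩ := Int.dvd_of_dvd_sq_add_sq hp3 (add_comm (c ^ 2) _ ▸ hcd)
  obtain ⟨D, rfl⟩ := Int.dvd_of_dvd_sq_add_sq hp3 hcd
  have hp0 : (p : ℚ) ≠ 0 := by exact_mod_cast hp.ne_zero
  refine ⟨A, -B, -C, -D, ?_⟩
  push_cast at hc hd ⊢
  ext
  · linear_combination hA / 2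
  · linear_combination -hB / 2
  · exact mul_left_cancel₀ hp0 (by linear_combination -hc / 2)
  · exact mul_left_cancel₀ hp0 (by linear_combination -hd / 2)

theorem IsOrder.mem_ord₁_or_mem_ord₂ {p : ℕ} (hp : p.Prime) (hp3 : p % 4 = 3)
    {O : Set ℍ[ℚ, -1, -(p : ℚ)]} (hO : IsOrder O)
    (hi : (⟨0, 1, 0, 0⟩ : ℍ[ℚ, -1, -(p : ℚ)]) ∈ O)
    (hj : (⟨0, 0, 1, 0⟩ : ℍ[ℚ, -1, -(p : ℚ)]) ∈ O) {x : ℍ[ℚ, -1, -(p : ℚ)]} (hx : x ∈ O) :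
    x ∈ Ord₁ (p : ℚ) ∨ x ∈ Ord₂ (p : ℚ) := by
  obtain ⟨A, B, C, D, rfl⟩ := hO.exists_half_int_coords hp hp3 hi hj hx
  obtain ⟨n, hn⟩ := (hO.2.2 _ hx).2
  have hnorm : A ^ 2 + B ^ 2 + (p : ℤ) * (C ^ 2 + D ^ 2) = 4 * n := by
    qify
    rw [← hn, nrd_eq]
    ring
  rcases Int.modEq_two_of_sq_add_sq_add_mul_sq_add_sq (by omega) hnorm with
    ⟨hAC, hBD⟩ | ⟨hAD, hBC⟩
  · exact .inl (mem_ord₁_of_modEq _ hAC hBD)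
  · exact .inr (mem_ord₂_of_modEq _ hAD hBC)

/-- For a prime `p ≡ 3 (mod 4)`, every order of `ℍ[ℚ, −1, −p]` containing both `i` and `j` is
contained in `O₁ = ℤ·1 + ℤ·i + ℤ·(1+j)/2 + ℤ·(i+k)/2` or in
`O₂ = ℤ·1 + ℤ·i + ℤ·(1+k)/2 + ℤ·(i−j)/2`. -/
theorem order_containing_i_j_subset (p : ℕ) (hp : p.Prime) (hp3 : p % 4 = 3)
    (O : Set ℍ[ℚ, -1, -(p:ℚ)]) (hO : IsOrder O)
    (hi : (⟨0,1,0,0⟩ : ℍ[ℚ, -1, -(p:ℚ)]) ∈ O)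
    (hj : (⟨0,0,1,0⟩ : ℍ[ℚ, -1, -(p:ℚ)]) ∈ O) :
    O ⊆ (Ord₁ (p:ℚ) : Set ℍ[ℚ, -1, -(p:ℚ)]) ∨ O ⊆ (Ord₂ (p:ℚ) : Set ℍ[ℚ, -1, -(p:ℚ)]) := by
  have hcover : O ⊆ Ord₁ (p : ℚ) ∪ Ord₂ (p : ℚ) := fun _ hx ↦
    hO.mem_ord₁_or_mem_ord₂ hp hp3 hi hj hx
  obtain ⟨⟨S, rfl⟩, -⟩ := hO
  exact AddSubgroupClass.subset_union (H := S.toAddSubgroup) (K := (Ord₁ (p : ℚ)).toAddSubgroup)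
    (L := (Ord₂ (p : ℚ)).toAddSubgroup) |>.mp hcover
end

section
/- Let B = ℍ[ℚ, −a, −b] with a, b positive rationals, let O₂ be a subring of B, and let I be a ℤ-submodule of B with elements of nonzero reduced norm such that, for a positive integer N₁, every product x̄·y with x, y ∈ I lies in N₁·O₂. Let J ⊆ O₂ be a left O₂-submodule and let I·J denote the ℤ-span of products of elements of I with elements of J. Suppose γ₁ ∈ I satisfies Nrd(γ₁) = N₁·ℓ^{e₁} and γ₂ ∈ I·J satisfies Nrd(γ₂) = N₁·N_J·ℓ^{e₂}, where ℓ, N_J are positive rationals and e₁, e₂ natural numbers. Then γ := γ̄₁·γ₂·(1/N₁) lies in J and satisfies Nrd(γ) = N_J·ℓ^{e₁+e₂}. -/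
/-!
Writing `γ̄₁ x = N₁ z` with `z ∈ O₂` for every `x ∈ I`, left multiplication by `N₁⁻¹ γ̄₁` sends
each generator `x y` of `I·J` to `z y ∈ O₂·J ⊆ J`, hence sends all of `I·J` into `J`. The norm
identity is multiplicativity of `Nrd` together with `Nrd γ̄₁ = Nrd γ₁`.
-/

open Quaternion

section ReducedNorm

variable {a b : ℚ}

lemma coe_Nrd (x : ℍ[ℚ, a, b]) : (Nrd x : ℍ[ℚ, a, b]) = x * star x :=
  (QuaternionAlgebra.mul_star_eq_coe x).symm

lemma Nrd_mul (x y : ℍ[ℚ, a, b]) : Nrd (x * y) = Nrd x * Nrd y :=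
  QuaternionAlgebra.coe_injective <| by
    rw [coe_Nrd, star_mul, mul_assoc, ← mul_assoc y, ← coe_Nrd, QuaternionAlgebra.coe_commutes,
      ← mul_assoc, ← coe_Nrd, QuaternionAlgebra.coe_mul]

lemma Nrd_star (x : ℍ[ℚ, a, b]) : Nrd (star x) = Nrd x := by
  rw [Nrd, star_star, star_comm_self', Nrd]

lemma Nrd_smul (c : ℚ) (x : ℍ[ℚ, a, b]) : Nrd (c • x) = c ^ 2 * Nrd x := by
  rw [Nrd, QuaternionAlgebra.star_smul, smul_mul_smul_comm, QuaternionAlgebra.re_smul,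
    smul_eq_mul, sq, Nrd]

end ReducedNorm

lemma mul_mem_of_mem_span_mul {R : Type*} [Ring R] (O : Subring R) {I J : Set R}
    (hJ0 : (0 : R) ∈ J) (hJadd : ∀ u ∈ J, ∀ v ∈ J, u + v ∈ J)
    (hJmod : ∀ o ∈ O, ∀ u ∈ J, o * u ∈ J) {γ : R} (hγ : ∀ x ∈ I, γ * x ∈ O) {w : R}
    (hw : w ∈ Submodule.span ℤ {z : R | ∃ x ∈ I, ∃ y ∈ J, z = x * y}) : γ * w ∈ J := by
  let J' : Submodule ℤ R :=
    { carrier := J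
      add_mem' := fun hu hv => hJadd _ hu _ hv
      zero_mem' := hJ0
      smul_mem' := fun n u hu => by
        rw [zsmul_eq_mul]
        exact hJmod _ (intCast_mem O n) u hu }
  have hspan : Submodule.span ℤ {z : R | ∃ x ∈ I, ∃ y ∈ J, z = x * y}
      ≤ J'.comap (LinearMap.mulLeft ℤ γ) := by
    refine Submodule.span_le.2 ?_
    rintro _ ⟨x, hx, y, hy, rfl⟩
    show γ * (x * y) ∈ J
    rw [← mul_assoc]
    exact hJmod _ (hγ x hx) y hy
  exact hspan hw

theorem reduction_to_special_order_general (a b : ℚ)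
    (O₂ : Subring ℍ[ℚ, -a, -b])
    (I : Submodule ℤ ℍ[ℚ, -a, -b])
    (N₁ : ℕ) (hN₁ : 0 < N₁)
    (hIO : ∀ x ∈ I, ∀ y ∈ I, ∃ z ∈ O₂, star x * y = (N₁ : ℍ[ℚ, -a, -b]) * z)
    (J : Set ℍ[ℚ, -a, -b])
    (hJ0 : (0 : ℍ[ℚ, -a, -b]) ∈ J)
    (hJadd : ∀ u ∈ J, ∀ v ∈ J, u + v ∈ J)
    (hJmod : ∀ o ∈ O₂, ∀ u ∈ J, o * u ∈ J)
    (ℓ NJ : ℚ)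
    (e₁ e₂ : ℕ)
    (γ₁ : ℍ[ℚ, -a, -b]) (hγ₁I : γ₁ ∈ I)
    (hγ₁ : Nrd γ₁ = (N₁ : ℚ) * ℓ ^ e₁)
    (γ₂ : ℍ[ℚ, -a, -b])
    (hγ₂IJ : γ₂ ∈ Submodule.span ℤ {z : ℍ[ℚ, -a, -b] | ∃ x ∈ I, ∃ y ∈ J, z = x * y})
    (hγ₂ : Nrd γ₂ = (N₁ : ℚ) * NJ * ℓ ^ e₂) :
    ((N₁ : ℚ)⁻¹) • (star γ₁ * γ₂) ∈ J
      ∧ Nrd (((N₁ : ℚ)⁻¹) • (star γ₁ * γ₂)) = NJ * ℓ ^ (e₁ + e₂) := by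
  have hN₁ℚ : (N₁ : ℚ) ≠ 0 := Nat.cast_ne_zero.2 hN₁.ne'
  have hγ₁O : ∀ x ∈ (I : Set ℍ[ℚ, -a, -b]), ((N₁ : ℚ)⁻¹ • star γ₁) * x ∈ O₂ := by
    intro x hx
    obtain ⟨z, hz, hzeq⟩ := hIO γ₁ hγ₁I x hx
    rwa [smul_mul_assoc, hzeq, ← nsmul_eq_mul, ← Nat.cast_smul_eq_nsmul ℚ, inv_smul_smul₀ hN₁ℚ]
  refine ⟨?_, ?_⟩
  · rw [← smul_mul_assoc]
    exact mul_mem_of_mem_span_mul O₂ hJ0 hJadd hJmod hγ₁O hγ₂IJ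
  · rw [Nrd_smul, Nrd_mul, Nrd_star, hγ₁, hγ₂, pow_add]
    field_simp

/-- Let `B = ℍ[ℚ, −a, −b]`, `O₂` a subring of `B`, `I` a `ℤ`-submodule of `B` whose nonzero
elements have nonzero reduced norm, with `x̄·y ∈ N₁·O₂` for all `x, y ∈ I`.  Let `J ⊆ O₂` be a
left `O₂`-submodule and `I·J` the `ℤ`-span of products.  If `γ₁ ∈ I` has `Nrd γ₁ = N₁·ℓ^{e₁}`
and `γ₂ ∈ I·J` has `Nrd γ₂ = N₁·N_J·ℓ^{e₂}`, then `γ = γ̄₁·γ₂/N₁ ∈ J` and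
`Nrd γ = N_J·ℓ^{e₁+e₂}`. -/
theorem reduction_to_special_order (a b : ℚ) (ha : 0 < a) (hb : 0 < b)
    (O₂ : Subring ℍ[ℚ, -a, -b])
    (I : Submodule ℤ ℍ[ℚ, -a, -b])
    (hInorm : ∀ x ∈ I, x ≠ 0 → Nrd x ≠ 0)
    (N₁ : ℕ) (hN₁ : 0 < N₁)
    (hIO : ∀ x ∈ I, ∀ y ∈ I, ∃ z ∈ O₂, star x * y = (N₁ : ℍ[ℚ, -a, -b]) * z)
    (J : Set ℍ[ℚ, -a, -b])
    (hJO : J ⊆ (O₂ : Set ℍ[ℚ, -a, -b]))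
    (hJ0 : (0 : ℍ[ℚ, -a, -b]) ∈ J)
    (hJadd : ∀ u ∈ J, ∀ v ∈ J, u + v ∈ J)
    (hJneg : ∀ u ∈ J, -u ∈ J)
    (hJmod : ∀ o ∈ O₂, ∀ u ∈ J, o * u ∈ J)
    (ℓ NJ : ℚ) (hℓ : 0 < ℓ) (hNJ : 0 < NJ)
    (e₁ e₂ : ℕ)
    (γ₁ : ℍ[ℚ, -a, -b]) (hγ₁I : γ₁ ∈ I)
    (hγ₁ : Nrd γ₁ = (N₁ : ℚ) * ℓ ^ e₁)
    (γ₂ : ℍ[ℚ, -a, -b])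
    (hγ₂IJ : γ₂ ∈ Submodule.span ℤ {z : ℍ[ℚ, -a, -b] | ∃ x ∈ I, ∃ y ∈ J, z = x * y})
    (hγ₂ : Nrd γ₂ = (N₁ : ℚ) * NJ * ℓ ^ e₂) :
    ((N₁ : ℚ)⁻¹) • (star γ₁ * γ₂) ∈ J
      ∧ Nrd (((N₁ : ℚ)⁻¹) • (star γ₁ * γ₂)) = NJ * ℓ ^ (e₁ + e₂) :=
  reduction_to_special_order_general a b O₂ I N₁ hN₁ hIO J hJ0 hJadd hJmod ℓ NJ e₁ e₂ γ₁ hγ₁I hγ₁ γ₂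
    hγ₂IJ hγ₂
end
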